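/- On the cone (ℝ₊ × M, g̃ = s² g₊ - ds²) with f̃ = s f₊, where M has dimension d+1, the weighted quantity F̃_φ^m := f̃ Δ̃ f̃ + (m-1)(|∇̃ f̃|² - μ) satisfies F̃_φ^m = F_φ^m(g₊) - (d+m) f₊², where F_φ^m(g₊) := f₊ Δ_{g₊} f₊ + (m-1)(|∇_{g₊} f₊|² - μ). -/

import Mathlib

open Matrix BigOperators

noncomputable section

/-- A metric (or 2-tensor) field on a coordinate patch of `ℝⁿ`, given by its
component matrix at each point. -/
abbrev MetricField (n : ℕ) := (Fin n → ℝ) → Matrix (Fin n) (Fin n) ℝ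

/-- Partial derivative of a scalar function in the `i`-th coordinate direction. -/
def pd {n : ℕ} (i : Fin n) (h : (Fin n → ℝ) → ℝ) (x : Fin n → ℝ) : ℝ :=
  fderiv ℝ h x (Pi.single i 1)

/-- Christoffel symbols of the first kind `Γ_{ijk}`. -/
def ChristoffelLow {n : ℕ} (g : MetricField n) (i j k : Fin n) (x : Fin n → ℝ) : ℝ :=
  (pd i (fun y => g y j k) x + pd j (fun y => g y i k) x - pd k (fun y => g y i j) x) / 2

/-- Christoffel symbols of the second kind `Γ^l_{ij}`. -/
def Christoffel {n : ℕ} (g : MetricField n) (l i j : Fin n) (x : Fin n → ℝ) : ℝ :=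
  ∑ k, (g x)⁻¹ l k * ChristoffelLow g i j k x

/-- Riemann curvature tensor `R^l_{ijk}` (type (1,3)). -/
def RiemannUp {n : ℕ} (g : MetricField n) (l i j k : Fin n) (x : Fin n → ℝ) : ℝ :=
  pd j (fun y => Christoffel g l k i y) x - pd k (fun y => Christoffel g l j i y) x
    + ∑ p, Christoffel g l j p x * Christoffel g p k i x
    - ∑ p, Christoffel g l k p x * Christoffel g p j i x

/-- Riemann curvature tensor `R_{ijkl}` (type (0,4)). -/
def RiemannLow {n : ℕ} (g : MetricField n) (i j k l : Fin n) (x : Fin n → ℝ) : ℝ :=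
  ∑ m, g x i m * RiemannUp g m j k l x

/-- Ricci tensor `R_{ij} = ∂_L Γ^L_{ij} - ∂_i Γ^L_{Lj} + Γ^P_{ij} Γ^L_{LP} - Γ^P_{Lj} Γ^L_{iP}`. -/
def RicciT {n : ℕ} (g : MetricField n) (i j : Fin n) (x : Fin n → ℝ) : ℝ :=
  (∑ l, pd l (fun y => Christoffel g l i j y) x)
    - (∑ l, pd i (fun y => Christoffel g l l j y) x)
    + (∑ p, ∑ l, Christoffel g p i j x * Christoffel g l l p x)
    - (∑ p, ∑ l, Christoffel g p l j x * Christoffel g l i p x)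

/-- Covariant Hessian `(∇²f)_{ij}` with respect to the metric `g`. -/
def HessT {n : ℕ} (g : MetricField n) (f : (Fin n → ℝ) → ℝ) (i j : Fin n) (x : Fin n → ℝ) : ℝ :=
  pd i (fun y => pd j f y) x - ∑ k, Christoffel g k i j x * pd k f x

/-- Laplacian `Δf = g^{ij}(∇²f)_{ij}`. -/
def LapT {n : ℕ} (g : MetricField n) (f : (Fin n → ℝ) → ℝ) (x : Fin n → ℝ) : ℝ :=
  ∑ i, ∑ j, (g x)⁻¹ i j * HessT g f i j x

/-- Squared gradient norm `|∇f|² = g^{ij} ∂_i f ∂_j f`. -/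
def GradSq {n : ℕ} (g : MetricField n) (f : (Fin n → ℝ) → ℝ) (x : Fin n → ℝ) : ℝ :=
  ∑ i, ∑ j, (g x)⁻¹ i j * pd i f x * pd j f x

/-- Scalar curvature `R = g^{ij} R_{ij}`. -/
def ScalarT {n : ℕ} (g : MetricField n) (x : Fin n → ℝ) : ℝ :=
  ∑ i, ∑ j, (g x)⁻¹ i j * RicciT g i j x

/-- Bakry–Émery Ricci tensor `Ric - (m/f) ∇²f`. -/
def BERic {n : ℕ} (g : MetricField n) (m : ℝ) (f : (Fin n → ℝ) → ℝ) (i j : Fin n)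
    (x : Fin n → ℝ) : ℝ :=
  RicciT g i j x - (m / f x) * HessT g f i j x

/-- The weighted quantity `F_φ^m = f Δf + (m-1)(|∇f|² - μ)`. -/
def Fphi {n : ℕ} (g : MetricField n) (m μ : ℝ) (f : (Fin n → ℝ) → ℝ) (x : Fin n → ℝ) : ℝ :=
  f x * LapT g f x + (m - 1) * (GradSq g f x - μ)

/-- The weighted scalar curvature `R_φ^m = R - (2m/f)Δf - (m(m-1)/f²)(|∇f|² - μ)`. -/
def Rphi {n : ℕ} (g : MetricField n) (m μ : ℝ) (f : (Fin n → ℝ) → ℝ) (x : Fin n → ℝ) : ℝ :=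
  ScalarT g x - (2 * m / f x) * LapT g f x
    - (m * (m - 1) / (f x) ^ 2) * (GradSq g f x - μ)

/-- Covariant derivative `∇_k P_{ij}` of a 2-tensor field `P` with respect to `g`. -/
def CovD2 {n : ℕ} (g P : MetricField n) (k i j : Fin n) (x : Fin n → ℝ) : ℝ :=
  pd k (fun y => P y i j) x - (∑ l, Christoffel g l k i x * P x l j)
    - (∑ l, Christoffel g l k j x * P x i l)

/-- Embedding of the `M`-indices into the ambient indices `{0} ∪ M ∪ {∞}`:
index `0` is the `t`-direction and `Fin.last (d+1)` is the `ρ`-direction. -/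
def emb {d : ℕ} (i : Fin d) : Fin (d + 2) := i.succ.castSucc

/-- The `M`-coordinates of an ambient point. -/
def mcoord {d : ℕ} (x : Fin (d + 2) → ℝ) : Fin d → ℝ := fun i => x (emb i)

/-- The straight and normal ambient metric `g̃ = 2ρ dt² + 2t dρ dt + t² g_ρ` built from a
one-parameter family `g_ρ` of metrics on `M`; coordinates `(t, x, ρ)` with `t` indexed by `0`
and `ρ` indexed by `Fin.last (d+1)`. -/
def ambMetric {d : ℕ} (gf : ℝ → (Fin d → ℝ) → Matrix (Fin d) (Fin d) ℝ) :
    MetricField (d + 2) := fun x =>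
  Matrix.of fun I J =>
    (if I = 0 ∧ J = 0 then 2 * x (Fin.last (d + 1)) else 0)
      + (if (I = 0 ∧ J = Fin.last (d + 1)) ∨ (I = Fin.last (d + 1) ∧ J = 0) then x 0 else 0)
      + (x 0) ^ 2 * ∑ i, ∑ j,
          (if I = emb i ∧ J = emb j then gf (x (Fin.last (d + 1))) (mcoord x) i j else 0)

/-- The ambient weighted function `f̃ = t f_ρ`. -/
def ambF {d : ℕ} (ff : ℝ → (Fin d → ℝ) → ℝ) (x : Fin (d + 2) → ℝ) : ℝ :=
  x 0 * ff (x (Fin.last (d + 1))) (mcoord x)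

/-- The cone metric `g̃ = -ds² + s² g₊` on `ℝ₊ × M` where `M` is `(d+1)`-dimensional;
the coordinate `s` is indexed by `0`. -/
def coneMetric {d : ℕ}
    (gp : (Fin (d + 1) → ℝ) → Matrix (Fin (d + 1)) (Fin (d + 1)) ℝ) :
    MetricField (d + 2) := fun x =>
  Matrix.of fun I J =>
    (if I = 0 ∧ J = 0 then -1 else 0)
      + (x 0) ^ 2 * ∑ i, ∑ j,
          (if I = Fin.succ i ∧ J = Fin.succ j then gp (x ∘ Fin.succ) i j else 0)

/-- The cone weighted function `f̃ = s f₊`. -/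
def coneF {d : ℕ} (fp : (Fin (d + 1) → ℝ) → ℝ) (x : Fin (d + 2) → ℝ) : ℝ :=
  x 0 * fp (x ∘ Fin.succ)

namespace ConeAux
variable {n d : ℕ}

-- (imports from s1/s2 assumed; here restate minimal used ones)
lemma pd_const (i : Fin n) (c : ℝ) (x : Fin n → ℝ) : pd i (fun _ => c) x = 0 := by simp [pd]
lemma pd_congr {f g : (Fin n → ℝ) → ℝ} (h : ∀ y, f y = g y) (i : Fin n) (x : Fin n → ℝ) :
    pd i f x = pd i g x := by rw [funext h]
lemma pd_mul {f g : (Fin n → ℝ) → ℝ} (i : Fin n) (x : Fin n → ℝ)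
    (hf : DifferentiableAt ℝ f x) (hg : DifferentiableAt ℝ g x) :
    pd i (fun y => f y * g y) x = pd i f x * g x + f x * pd i g x := by
  simp [pd, fderiv_fun_mul hf hg]; ring
def restr (d : ℕ) : ((Fin (d+2)) → ℝ) →L[ℝ] ((Fin (d+1)) → ℝ) :=
  ContinuousLinearMap.pi fun i => ContinuousLinearMap.proj (Fin.succ i)
lemma restr_apply (y : Fin (d+2) → ℝ) : restr d y = y ∘ Fin.succ := rfl
lemma diff_comp {h : (Fin (d+1) → ℝ) → ℝ} {x : Fin (d+2) → ℝ}
    (hh : DifferentiableAt ℝ h (x ∘ Fin.succ)) :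
    DifferentiableAt ℝ (fun y => h (y ∘ Fin.succ)) x := by
  have := hh.comp x (restr d).differentiableAt
  exact this
lemma pd_comp (i : Fin (d+2)) (h : (Fin (d+1) → ℝ) → ℝ) (x : Fin (d+2) → ℝ)
    (hh : DifferentiableAt ℝ h (x ∘ Fin.succ)) :
    pd i (fun y => h (y ∘ Fin.succ)) x
      = fderiv ℝ h (x ∘ Fin.succ) ((Pi.single i 1 : Fin (d+2) → ℝ) ∘ Fin.succ) := by
  have heq : (fun y : Fin (d+2) → ℝ => h (y ∘ Fin.succ)) = h ∘ (restr d) := rfl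
  rw [pd, heq, fderiv_comp x (by simpa [restr_apply] using hh) (restr d).differentiableAt]
  simp [ContinuousLinearMap.fderiv, restr_apply]
lemma comp_single_zero : ((Pi.single (0 : Fin (d+2)) 1 : Fin (d+2) → ℝ) ∘ Fin.succ) = 0 := by
  funext k; simp [Function.comp, Pi.single_eq_of_ne (Fin.succ_ne_zero k)]
lemma comp_single_succ (i : Fin (d+1)) :
    ((Pi.single (Fin.succ i) 1 : Fin (d+2) → ℝ) ∘ Fin.succ) = Pi.single i 1 := by
  funext k; simp [Function.comp, Pi.single_apply, Fin.succ_inj]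
lemma pd_zero_comp (h : (Fin (d+1) → ℝ) → ℝ) (x : Fin (d+2) → ℝ)
    (hh : DifferentiableAt ℝ h (x ∘ Fin.succ)) :
    pd 0 (fun y => h (y ∘ Fin.succ)) x = 0 := by
  rw [pd_comp 0 h x hh, comp_single_zero, map_zero]
lemma pd_succ_comp (i : Fin (d+1)) (h : (Fin (d+1) → ℝ) → ℝ) (x : Fin (d+2) → ℝ)
    (hh : DifferentiableAt ℝ h (x ∘ Fin.succ)) :
    pd (Fin.succ i) (fun y => h (y ∘ Fin.succ)) x = pd i h (x ∘ Fin.succ) := by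
  rw [pd_comp _ h x hh, comp_single_succ, pd]
lemma diff_coord (x : Fin (d+2) → ℝ) : DifferentiableAt ℝ (fun y : Fin (d+2) → ℝ => y 0) x :=
  (differentiable_pi.mp differentiable_id) 0 x
lemma pd_coord (i : Fin (d+2)) (x : Fin (d+2) → ℝ) :
    pd i (fun y : Fin (d+2) → ℝ => y 0) x = if (0 : Fin (d+2)) = i then 1 else 0 := by
  have : (fun y : Fin (d+2) → ℝ => y 0)
      = (ContinuousLinearMap.proj (R := ℝ) (φ := fun _ : Fin (d+2) => ℝ) 0) := rfl
  rw [pd, this, ContinuousLinearMap.fderiv]; simp [Pi.single_apply]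
lemma cone_zero_zero (gp) (x : Fin (d+2) → ℝ) : coneMetric gp x 0 0 = -1 := by
  simp [coneMetric, (Fin.succ_ne_zero _).symm]
lemma cone_zero_succ (gp) (x : Fin (d+2) → ℝ) (j : Fin (d+1)) :
    coneMetric gp x 0 (Fin.succ j) = 0 := by
  simp [coneMetric, (Fin.succ_ne_zero _).symm, Fin.succ_ne_zero]
lemma cone_succ_zero (gp) (x : Fin (d+2) → ℝ) (i : Fin (d+1)) :
    coneMetric gp x (Fin.succ i) 0 = 0 := by
  simp [coneMetric, (Fin.succ_ne_zero _).symm, Fin.succ_ne_zero]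
lemma cone_succ_succ (gp) (x : Fin (d+2) → ℝ) (i j : Fin (d+1)) :
    coneMetric gp x (Fin.succ i) (Fin.succ j) = (x 0)^2 * gp (x ∘ Fin.succ) i j := by
  simp only [coneMetric, Matrix.of_apply, Fin.succ_ne_zero, false_and, if_false, zero_add,
    Fin.succ_inj]
  congr 1
  rw [Finset.sum_eq_single i, Finset.sum_eq_single j]
  · simp
  · intro b _ hb; simp [hb.symm]
  · simp
  · intro b _ hb; rw [Finset.sum_eq_single j] <;> simp [hb.symm]
  · simp

-- new material starts here

variable (gp : (Fin (d + 1) → ℝ) → Matrix (Fin (d + 1)) (Fin (d + 1)) ℝ) (x : Fin (d+2) → ℝ)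


def coneInv : Matrix (Fin (d+2)) (Fin (d+2)) ℝ :=
  Matrix.of fun I J =>
    Fin.cases (Fin.cases (-1) (fun _ => 0) J)
      (fun i => Fin.cases 0 (fun j => ((x 0)^2)⁻¹ * (gp (x ∘ Fin.succ))⁻¹ i j) J) I

lemma coneInv_zero_zero : coneInv gp x 0 0 = -1 := rfl
lemma coneInv_zero_succ (j : Fin (d+1)) : coneInv gp x 0 (Fin.succ j) = 0 := by
  simp [coneInv]
lemma coneInv_succ_zero (i : Fin (d+1)) : coneInv gp x (Fin.succ i) 0 = 0 := by
  simp [coneInv]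
lemma coneInv_succ_succ (i j : Fin (d+1)) :
    coneInv gp x (Fin.succ i) (Fin.succ j) = ((x 0)^2)⁻¹ * (gp (x ∘ Fin.succ))⁻¹ i j := by
  simp [coneInv]

lemma cone_inv_eq (hx : 0 < x 0) (hgpos : ((gp (x ∘ Fin.succ))).PosDef) :
    (coneMetric gp x)⁻¹ = coneInv gp x := by
  have hdet : IsUnit (gp (x ∘ Fin.succ)).det :=
    isUnit_iff_ne_zero.mpr (ne_of_gt hgpos.det_pos)
  have hmul : gp (x ∘ Fin.succ) * (gp (x ∘ Fin.succ))⁻¹ = 1 :=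
    Matrix.mul_nonsing_inv _ hdet
  apply Matrix.inv_eq_right_inv
  ext I J
  rw [Matrix.mul_apply, Fin.sum_univ_succ]
  induction I using Fin.cases with
  | zero =>
    induction J using Fin.cases with
    | zero => simp [cone_zero_zero, cone_zero_succ, coneInv_zero_zero, coneInv_succ_zero]
    | succ j => simp [cone_zero_zero, cone_zero_succ, coneInv_zero_succ, coneInv_succ_succ,
        (Fin.succ_ne_zero j).symm]
  | succ i =>
    induction J using Fin.cases with
    | zero => simp [cone_succ_zero, cone_succ_succ, coneInv_zero_zero, coneInv_succ_zero,
        Fin.succ_ne_zero]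
    | succ j =>
      have hx2 : (x 0)^2 ≠ 0 := pow_ne_zero _ (ne_of_gt hx)
      simp only [cone_succ_zero, cone_succ_succ, coneInv_zero_succ, coneInv_succ_succ,
        zero_mul, zero_add]
      have : ∀ k, (x 0)^2 * gp (x ∘ Fin.succ) i k * (((x 0)^2)⁻¹ * (gp (x ∘ Fin.succ))⁻¹ k j)
          = gp (x ∘ Fin.succ) i k * (gp (x ∘ Fin.succ))⁻¹ k j := by
        intro k; field_simp
      rw [Finset.sum_congr rfl (fun k _ => this k), ← Matrix.mul_apply, hmul]
      simp [Matrix.one_apply, Fin.succ_inj]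

lemma fun_cone_00 : (fun y : Fin (d+2) → ℝ => coneMetric gp y 0 0) = fun _ => (-1 : ℝ) :=
  funext fun y => cone_zero_zero gp y
lemma fun_cone_0s (j : Fin (d+1)) :
    (fun y : Fin (d+2) → ℝ => coneMetric gp y 0 (Fin.succ j)) = fun _ => (0 : ℝ) :=
  funext fun y => cone_zero_succ gp y j
lemma fun_cone_s0 (i : Fin (d+1)) :
    (fun y : Fin (d+2) → ℝ => coneMetric gp y (Fin.succ i) 0) = fun _ => (0 : ℝ) :=
  funext fun y => cone_succ_zero gp y i
lemma fun_cone_ss (i j : Fin (d+1)) :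
    (fun y : Fin (d+2) → ℝ => coneMetric gp y (Fin.succ i) (Fin.succ j))
      = fun y => (y 0)^2 * gp (y ∘ Fin.succ) i j :=
  funext fun y => cone_succ_succ gp y i j

lemma diff_sq : DifferentiableAt ℝ (fun y : Fin (d+2) → ℝ => (y 0)^2) x :=
  (diff_coord x).pow 2

lemma pd_sq_zero : pd 0 (fun y : Fin (d+2) → ℝ => (y 0)^2) x = 2 * x 0 := by
  have h : ∀ y : Fin (d+2) → ℝ, (y 0)^2 = y 0 * y 0 := fun y => by ring
  rw [pd_congr h, pd_mul _ _ (diff_coord x) (diff_coord x)]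
  simp [pd_coord]; ring

lemma pd_sq_succ (i : Fin (d+1)) : pd (Fin.succ i) (fun y : Fin (d+2) → ℝ => (y 0)^2) x = 0 := by
  have h : ∀ y : Fin (d+2) → ℝ, (y 0)^2 = y 0 * y 0 := fun y => by ring
  rw [pd_congr h, pd_mul _ _ (diff_coord x) (diff_coord x)]
  simp [pd_coord, (Fin.succ_ne_zero i).symm]

section
variable {h : (Fin (d+1) → ℝ) → ℝ} (hh : DifferentiableAt ℝ h (x ∘ Fin.succ))
include hh

lemma diff_sqmul : DifferentiableAt ℝ (fun y : Fin (d+2) → ℝ => (y 0)^2 * h (y ∘ Fin.succ)) x :=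
  (diff_sq x).mul (diff_comp hh)

lemma pd_sqmul_zero :
    pd 0 (fun y : Fin (d+2) → ℝ => (y 0)^2 * h (y ∘ Fin.succ)) x = 2 * x 0 * h (x ∘ Fin.succ) := by
  rw [pd_mul _ _ (diff_sq x) (diff_comp hh), pd_sq_zero, pd_zero_comp _ _ hh]; ring

lemma pd_sqmul_succ (k : Fin (d+1)) :
    pd (Fin.succ k) (fun y : Fin (d+2) → ℝ => (y 0)^2 * h (y ∘ Fin.succ)) x
      = (x 0)^2 * pd k h (x ∘ Fin.succ) := by
  rw [pd_mul _ _ (diff_sq x) (diff_comp hh), pd_sq_succ, pd_succ_comp _ _ _ hh]; ring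

end

variable (hG : ∀ i j, DifferentiableAt ℝ (fun z => gp z i j) (x ∘ Fin.succ))

set_option linter.unusedSectionVars false

section
include hG

lemma CL_000 : ChristoffelLow (coneMetric gp) 0 0 0 x = 0 := by
  simp only [ChristoffelLow, fun_cone_00, pd_const]; simp

lemma CL_00s (k : Fin (d+1)) : ChristoffelLow (coneMetric gp) 0 0 (Fin.succ k) x = 0 := by
  simp only [ChristoffelLow, fun_cone_00, fun_cone_0s, pd_const]; simp

lemma CL_0s0 (j : Fin (d+1)) : ChristoffelLow (coneMetric gp) 0 (Fin.succ j) 0 x = 0 := by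
  simp only [ChristoffelLow, fun_cone_00, fun_cone_0s, fun_cone_s0, pd_const]; simp

lemma CL_s00 (i : Fin (d+1)) : ChristoffelLow (coneMetric gp) (Fin.succ i) 0 0 x = 0 := by
  simp only [ChristoffelLow, fun_cone_00, fun_cone_0s, fun_cone_s0, pd_const]; simp

lemma CL_0ss (j k : Fin (d+1)) :
    ChristoffelLow (coneMetric gp) 0 (Fin.succ j) (Fin.succ k) x
      = x 0 * gp (x ∘ Fin.succ) j k := by
  simp only [ChristoffelLow, fun_cone_0s, fun_cone_ss, pd_const]
  rw [pd_sqmul_zero x (hG j k)]; ring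

lemma CL_s0s (i k : Fin (d+1)) :
    ChristoffelLow (coneMetric gp) (Fin.succ i) 0 (Fin.succ k) x
      = x 0 * gp (x ∘ Fin.succ) i k := by
  simp only [ChristoffelLow, fun_cone_0s, fun_cone_s0, fun_cone_ss, pd_const]
  rw [pd_sqmul_zero x (hG i k)]; ring

lemma CL_ss0 (i j : Fin (d+1)) :
    ChristoffelLow (coneMetric gp) (Fin.succ i) (Fin.succ j) 0 x
      = -(x 0 * gp (x ∘ Fin.succ) i j) := by
  simp only [ChristoffelLow, fun_cone_s0, fun_cone_ss, pd_const]
  rw [pd_sqmul_zero x (hG i j)]; ring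

lemma CL_sss (i j k : Fin (d+1)) :
    ChristoffelLow (coneMetric gp) (Fin.succ i) (Fin.succ j) (Fin.succ k) x
      = (x 0)^2 * ChristoffelLow gp i j k (x ∘ Fin.succ) := by
  simp only [ChristoffelLow, fun_cone_ss]
  rw [pd_sqmul_succ x (hG j k), pd_sqmul_succ x (hG i k), pd_sqmul_succ x (hG i j)]
  ring

end

variable (hx : 0 < x 0) (hpos : (gp (x ∘ Fin.succ)).PosDef) (hsym : (gp (x ∘ Fin.succ)).IsSymm)

section
include hx hpos

lemma gp_det_unit : IsUnit (gp (x ∘ Fin.succ)).det := by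
  exact isUnit_iff_ne_zero.mpr (ne_of_gt hpos.det_pos)

include hG

lemma Gc_00 (K : Fin (d+2)) : Christoffel (coneMetric gp) K 0 0 x = 0 := by
  rw [Christoffel, cone_inv_eq gp x hx hpos]
  rw [Fin.sum_univ_succ, CL_000 gp x hG]
  simp only [mul_zero, zero_add]
  rw [Finset.sum_eq_zero]
  intro k _
  rw [CL_00s gp x hG, mul_zero]

lemma Gc_0_0s (j : Fin (d+1)) : Christoffel (coneMetric gp) 0 0 (Fin.succ j) x = 0 := by
  rw [Christoffel, cone_inv_eq gp x hx hpos, Fin.sum_univ_succ, CL_0s0 gp x hG]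
  simp [coneInv_zero_succ]

lemma Gc_0_s0 (i : Fin (d+1)) : Christoffel (coneMetric gp) 0 (Fin.succ i) 0 x = 0 := by
  rw [Christoffel, cone_inv_eq gp x hx hpos, Fin.sum_univ_succ, CL_s00 gp x hG]
  simp [coneInv_zero_succ]

include hsym

lemma Gc_s_0s (l j : Fin (d+1)) :
    Christoffel (coneMetric gp) (Fin.succ l) 0 (Fin.succ j) x
      = (x 0)⁻¹ * (if l = j then 1 else 0) := by
  rw [Christoffel, cone_inv_eq gp x hx hpos, Fin.sum_univ_succ, CL_0s0 gp x hG]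
  rw [coneInv_succ_zero]
  simp only [mul_zero, zero_mul, zero_add]
  have hxne : x 0 ≠ 0 := ne_of_gt hx
  have step : ∀ k, coneInv gp x (Fin.succ l) (Fin.succ k)
      * ChristoffelLow (coneMetric gp) 0 (Fin.succ j) (Fin.succ k) x
      = (x 0)⁻¹ * ((gp (x ∘ Fin.succ))⁻¹ l k * gp (x ∘ Fin.succ) k j) := by
    intro k
    rw [coneInv_succ_succ, CL_0ss gp x hG]
    have : gp (x ∘ Fin.succ) j k = gp (x ∘ Fin.succ) k j := (hsym.apply j k).symm
    rw [this]
    field_simp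
  rw [Finset.sum_congr rfl (fun k _ => step k), ← Finset.mul_sum, ← Matrix.mul_apply,
    Matrix.nonsing_inv_mul _ (gp_det_unit gp x hx hpos)]
  simp [Matrix.one_apply]

lemma Gc_s_s0 (l i : Fin (d+1)) :
    Christoffel (coneMetric gp) (Fin.succ l) (Fin.succ i) 0 x
      = (x 0)⁻¹ * (if l = i then 1 else 0) := by
  rw [Christoffel, cone_inv_eq gp x hx hpos, Fin.sum_univ_succ, CL_s00 gp x hG]
  rw [coneInv_succ_zero]
  simp only [mul_zero, zero_mul, zero_add]
  have step : ∀ k, coneInv gp x (Fin.succ l) (Fin.succ k)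
      * ChristoffelLow (coneMetric gp) (Fin.succ i) 0 (Fin.succ k) x
      = (x 0)⁻¹ * ((gp (x ∘ Fin.succ))⁻¹ l k * gp (x ∘ Fin.succ) k i) := by
    intro k
    rw [coneInv_succ_succ, CL_s0s gp x hG]
    have : gp (x ∘ Fin.succ) i k = gp (x ∘ Fin.succ) k i := (hsym.apply i k).symm
    rw [this]
    have hxne : x 0 ≠ 0 := ne_of_gt hx
    field_simp
  rw [Finset.sum_congr rfl (fun k _ => step k), ← Finset.mul_sum, ← Matrix.mul_apply,
    Matrix.nonsing_inv_mul _ (gp_det_unit gp x hx hpos)]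
  simp [Matrix.one_apply]

omit hsym

lemma Gc_0_ss (i j : Fin (d+1)) :
    Christoffel (coneMetric gp) 0 (Fin.succ i) (Fin.succ j) x
      = x 0 * gp (x ∘ Fin.succ) i j := by
  rw [Christoffel, cone_inv_eq gp x hx hpos, Fin.sum_univ_succ, CL_ss0 gp x hG]
  rw [coneInv_zero_zero]
  have : ∀ k, coneInv gp x 0 (Fin.succ k)
      * ChristoffelLow (coneMetric gp) (Fin.succ i) (Fin.succ j) (Fin.succ k) x = 0 := by
    intro k; rw [coneInv_zero_succ, zero_mul]
  rw [Finset.sum_congr rfl (fun k _ => this k)]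
  simp

lemma Gc_s_ss (l i j : Fin (d+1)) :
    Christoffel (coneMetric gp) (Fin.succ l) (Fin.succ i) (Fin.succ j) x
      = Christoffel gp l i j (x ∘ Fin.succ) := by
  rw [Christoffel, cone_inv_eq gp x hx hpos, Fin.sum_univ_succ, CL_ss0 gp x hG,
    coneInv_succ_zero]
  simp only [zero_mul, zero_add]
  have hxne : x 0 ≠ 0 := ne_of_gt hx
  have step : ∀ k, coneInv gp x (Fin.succ l) (Fin.succ k)
      * ChristoffelLow (coneMetric gp) (Fin.succ i) (Fin.succ j) (Fin.succ k) x
      = (gp (x ∘ Fin.succ))⁻¹ l k * ChristoffelLow gp i j k (x ∘ Fin.succ) := by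
    intro k
    rw [coneInv_succ_succ, CL_sss gp x hG]
    field_simp
  rw [Finset.sum_congr rfl (fun k _ => step k), Christoffel]

end


lemma contDiff_pd (i : Fin n) {h : (Fin n → ℝ) → ℝ} (hh : ContDiff ℝ (⊤ : ℕ∞) h) :
    ContDiff ℝ (⊤ : ℕ∞) (fun x => pd i h x) :=
  (hh.fderiv_right (by simp)).clm_apply contDiff_const

variable (fp : (Fin (d + 1) → ℝ) → ℝ)
variable (hf : Differentiable ℝ fp) (hfd : ∀ j, Differentiable ℝ (pd j fp))

section
include hf

lemma pd_coneF_zero : ∀ y : Fin (d+2) → ℝ, pd 0 (coneF fp) y = fp (y ∘ Fin.succ) := by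
  intro y
  have : coneF fp = fun y : Fin (d+2) → ℝ => (fun w : Fin (d+2) → ℝ => w 0) y * fp (y ∘ Fin.succ) := rfl
  rw [this, pd_mul _ _ (diff_coord y) (diff_comp (hf _)), pd_coord,
    pd_zero_comp _ _ (hf _)]
  simp

lemma pd_coneF_succ (j : Fin (d+1)) :
    ∀ y : Fin (d+2) → ℝ, pd (Fin.succ j) (coneF fp) y = y 0 * pd j fp (y ∘ Fin.succ) := by
  intro y
  have : coneF fp = fun y : Fin (d+2) → ℝ => (fun w : Fin (d+2) → ℝ => w 0) y * fp (y ∘ Fin.succ) := rfl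
  rw [this, pd_mul _ _ (diff_coord y) (diff_comp (hf _)), pd_coord,
    pd_succ_comp _ _ _ (hf _)]
  simp [(Fin.succ_ne_zero j).symm]

include hx hpos hG

lemma hess_cone_00 : HessT (coneMetric gp) (coneF fp) 0 0 x = 0 := by
  rw [HessT]
  rw [pd_congr (pd_coneF_zero fp hf), pd_zero_comp _ _ (hf _)]
  rw [Finset.sum_eq_zero]
  · simp
  · intro K _
    rw [Gc_00 gp x hG hx hpos, zero_mul]

include hfd

lemma hess_cone_ss (i j : Fin (d+1)) :
    HessT (coneMetric gp) (coneF fp) (Fin.succ i) (Fin.succ j) x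
      = x 0 * HessT gp fp i j (x ∘ Fin.succ)
        - x 0 * gp (x ∘ Fin.succ) i j * fp (x ∘ Fin.succ) := by
  rw [HessT]
  rw [pd_congr (pd_coneF_succ fp hf j)]
  have h1 : pd (Fin.succ i) (fun y : Fin (d+2) → ℝ => y 0 * pd j fp (y ∘ Fin.succ)) x
      = x 0 * pd i (fun z => pd j fp z) (x ∘ Fin.succ) := by
    have : (fun y : Fin (d+2) → ℝ => y 0 * pd j fp (y ∘ Fin.succ))
        = fun y : Fin (d+2) → ℝ => (fun w : Fin (d+2) → ℝ => w 0) y * (fun z => pd j fp z) (y ∘ Fin.succ) := rfl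
    rw [this, pd_mul _ _ (diff_coord x) (diff_comp ((hfd j) _)), pd_coord,
      pd_succ_comp _ _ _ ((hfd j) _)]
    simp [(Fin.succ_ne_zero i).symm]
  rw [h1, Fin.sum_univ_succ, pd_coneF_zero fp hf, Gc_0_ss gp x hG hx hpos]
  have h2 : ∀ l, Christoffel (coneMetric gp) (Fin.succ l) (Fin.succ i) (Fin.succ j) x
      * pd (Fin.succ l) (coneF fp) x
      = x 0 * (Christoffel gp l i j (x ∘ Fin.succ) * pd l fp (x ∘ Fin.succ)) := by
    intro l
    rw [Gc_s_ss gp x hG hx hpos, pd_coneF_succ fp hf]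
    ring
  rw [Finset.sum_congr rfl (fun l _ => h2 l), ← Finset.mul_sum, HessT]
  ring

end


lemma double_sum_split (F : Fin (d+2) → Fin (d+2) → ℝ) :
    ∑ I, ∑ J, F I J
      = F 0 0 + (∑ j, F 0 (Fin.succ j)) + (∑ i, F (Fin.succ i) 0)
        + ∑ i, ∑ j, F (Fin.succ i) (Fin.succ j) := by
  rw [Fin.sum_univ_succ, Fin.sum_univ_succ]
  have h : ∀ i : Fin (d+1), ∑ J, F (Fin.succ i) J
      = F (Fin.succ i) 0 + ∑ j, F (Fin.succ i) (Fin.succ j) := fun i => Fin.sum_univ_succ _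
  rw [Finset.sum_congr rfl (fun i _ => h i), Finset.sum_add_distrib]
  ring

section
include hx hpos hsym

lemma inv_contract :
    ∑ i, ∑ j, (gp (x ∘ Fin.succ))⁻¹ i j * gp (x ∘ Fin.succ) i j = (d : ℝ) + 1 := by
  have h1 : ∀ i j, (gp (x ∘ Fin.succ))⁻¹ i j * gp (x ∘ Fin.succ) i j
      = (gp (x ∘ Fin.succ))⁻¹ i j * gp (x ∘ Fin.succ) j i := by
    intro i j; rw [hsym.apply j i]
  calc ∑ i, ∑ j, (gp (x ∘ Fin.succ))⁻¹ i j * gp (x ∘ Fin.succ) i j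
      = ∑ i, ((gp (x ∘ Fin.succ))⁻¹ * gp (x ∘ Fin.succ)) i i := by
        refine Finset.sum_congr rfl fun i _ => ?_
        rw [Matrix.mul_apply]
        exact Finset.sum_congr rfl fun j _ => h1 i j
    _ = ∑ i : Fin (d+1), (1 : Matrix (Fin (d+1)) (Fin (d+1)) ℝ) i i := by
        rw [Matrix.nonsing_inv_mul _ (gp_det_unit gp x hx hpos)]
    _ = (d : ℝ) + 1 := by
        simp [Matrix.one_apply]

include hG hf hfd

lemma lap_cone :
    LapT (coneMetric gp) (coneF fp) x
      = (x 0)⁻¹ * (LapT gp fp (x ∘ Fin.succ) - ((d : ℝ) + 1) * fp (x ∘ Fin.succ)) := by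
  have hxne : x 0 ≠ 0 := ne_of_gt hx
  rw [LapT, cone_inv_eq gp x hx hpos, double_sum_split]
  simp only [coneInv_zero_zero, coneInv_zero_succ, coneInv_succ_zero,
    coneInv_succ_succ, zero_mul, Finset.sum_const_zero, add_zero, zero_add]
  rw [hess_cone_00 gp x hG hx hpos fp hf]
  have step : ∀ i j : Fin (d+1),
      ((x 0)^2)⁻¹ * (gp (x ∘ Fin.succ))⁻¹ i j
        * HessT (coneMetric gp) (coneF fp) (Fin.succ i) (Fin.succ j) x
      = (x 0)⁻¹ * ((gp (x ∘ Fin.succ))⁻¹ i j * HessT gp fp i j (x ∘ Fin.succ))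
        - (x 0)⁻¹ * fp (x ∘ Fin.succ)
            * ((gp (x ∘ Fin.succ))⁻¹ i j * gp (x ∘ Fin.succ) i j) := by
    intro i j
    rw [hess_cone_ss gp x hG hx hpos fp hf hfd]
    field_simp
  have hsum : ∀ i : Fin (d+1), ∑ j, ((x 0)^2)⁻¹ * (gp (x ∘ Fin.succ))⁻¹ i j
        * HessT (coneMetric gp) (coneF fp) (Fin.succ i) (Fin.succ j) x
      = (x 0)⁻¹ * (∑ j, (gp (x ∘ Fin.succ))⁻¹ i j * HessT gp fp i j (x ∘ Fin.succ))
        - (x 0)⁻¹ * fp (x ∘ Fin.succ)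
            * (∑ j, (gp (x ∘ Fin.succ))⁻¹ i j * gp (x ∘ Fin.succ) i j) := by
    intro i
    rw [Finset.sum_congr rfl (fun j _ => step i j), Finset.sum_sub_distrib,
      ← Finset.mul_sum, ← Finset.mul_sum]
  rw [Finset.sum_congr rfl (fun i _ => hsum i), Finset.sum_sub_distrib,
    ← Finset.mul_sum, ← Finset.mul_sum]
  rw [inv_contract gp x hx hpos hsym]
  rw [LapT]
  ring

lemma gradsq_cone :
    GradSq (coneMetric gp) (coneF fp) x
      = GradSq gp fp (x ∘ Fin.succ) - (fp (x ∘ Fin.succ))^2 := by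
  have hxne : x 0 ≠ 0 := ne_of_gt hx
  rw [GradSq, cone_inv_eq gp x hx hpos, double_sum_split]
  simp only [coneInv_zero_zero, coneInv_zero_succ, coneInv_succ_zero,
    coneInv_succ_succ, zero_mul, Finset.sum_const_zero, add_zero, zero_add,
    pd_coneF_zero fp hf, pd_coneF_succ fp hf]
  have step : ∀ i j : Fin (d+1),
      ((x 0)^2)⁻¹ * (gp (x ∘ Fin.succ))⁻¹ i j * (x 0 * pd i fp (x ∘ Fin.succ))
        * (x 0 * pd j fp (x ∘ Fin.succ))
      = (gp (x ∘ Fin.succ))⁻¹ i j * pd i fp (x ∘ Fin.succ) * pd j fp (x ∘ Fin.succ) := by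
    intro i j; field_simp
  rw [Finset.sum_congr rfl (fun i _ => Finset.sum_congr rfl (fun j _ => step i j)), GradSq]
  ring

end
end ConeAux

/-- On the cone `(ℝ₊ × M, g̃ = s² g₊ - ds²)` with `f̃ = s f₊`, one has
`F̃_φ^m = F_φ^m(g₊) - (d+m) f₊²`, where `F_φ^m = f Δf + (m-1)(|∇f|² - μ)`. -/
theorem cone_weighted_F {d : ℕ}
    (gp : (Fin (d + 1) → ℝ) → Matrix (Fin (d + 1)) (Fin (d + 1)) ℝ)
    (fp : (Fin (d + 1) → ℝ) → ℝ) (m μ : ℝ)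
    (hfp : ∀ x, 0 < fp x) (hfps : ContDiff ℝ (⊤ : ℕ∞) fp)
    (hgs : ∀ i j, ContDiff ℝ (⊤ : ℕ∞) fun x => gp x i j)
    (hgsym : ∀ x, (gp x).IsSymm) (hgpos : ∀ x, (gp x).PosDef) :
    ∀ x : Fin (d + 2) → ℝ, 0 < x 0 →
      Fphi (coneMetric gp) m μ (coneF fp) x
        = Fphi gp m μ fp (x ∘ Fin.succ) - ((d : ℝ) + m) * (fp (x ∘ Fin.succ)) ^ 2 := by
  intro x hx
  have hG : ∀ i j, DifferentiableAt ℝ (fun z => gp z i j) (x ∘ Fin.succ) :=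
    fun i j => ((hgs i j).differentiable (by simp)) _
  have hf : Differentiable ℝ fp := hfps.differentiable (by simp)
  have hfd : ∀ j, Differentiable ℝ (pd j fp) :=
    fun j => (ConeAux.contDiff_pd j hfps).differentiable (by simp)
  have hpos := hgpos (x ∘ Fin.succ)
  have hsym := hgsym (x ∘ Fin.succ)
  have hxne : x 0 ≠ 0 := ne_of_gt hx
  rw [Fphi, Fphi, ConeAux.lap_cone gp x hG hx hpos hsym fp hf hfd,
    ConeAux.gradsq_cone gp x hG hx hpos hsym fp hf hfd, coneF]
  field_simp
  ring
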